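/- Assume Υ(0) = Υ₀ = n₀/(n₀+1), Υ(1) = 1, σ(0) = 0, σ(1) = γ₁ − 1 with 1 < γ₁ ≤ 2, f(0) > 0, f(1) > 0. If 0 < n₀ ≤ 3, then every interior orbit converges to the fixed point B₂ = (0,1,0) as λ → ∞. If n₀ = 0, then every interior orbit converges to a point of the line L₄ = {(U,1,0) : U ∈ [0,1]} as λ → ∞. -/

import Mathlib

/-!
Write `x`, `y`, `z` for the logits of `U`, `V`, `Ω`, so that `z' = -f(Ω) H` and `Ω` decreases.
Since `U' ≤ 0` wherever `U ≥ 3/4`, `U` stays below `max (3/4) (U 0)`, hence `x` is eventually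
bounded above.

* `Ω → 0`: otherwise `z` is bounded below, and `x + log V - K z` (for a large `K`) is bounded
  above although its derivative is bounded below by a positive constant.
* If `Υ(0) ≤ 3/4`, then `G = x + 3y - CΩ` is eventually nondecreasing with `G' ≥ 2U(1 - V)`:
  the weight `3` turns the `H`-coefficient into `3 - 4Υ(0) ≥ 0`, and `CΩ` absorbs the errors
  of size `ΩH`, which are integrable because `Ω' = -fΩ(1-Ω)H`. If `G` is bounded, a Barbalat
  argument gives `V → 1`; otherwise `y → ∞`.
* If `Υ(0) > 0`, then `Υ(Ω) H` stays away from `0`, so `x' ≤ -κ < 0` eventually and `U → 0`.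
  If `Υ(0) = 0`, then `|x'| ≤ 3(1 - V) + LΩH` is dominated by `-Q'` for a nonnegative
  `Q = K₁ (-log V) + K₂ Ω`, so `x` converges.
-/

open Set Filter Topology

/-- `H(U,V,Ω) = (1+σ(Ω))V(1−U+σ(Ω)U)`. -/
noncomputable def Hfun (σ : ℝ → ℝ) (U V W : ℝ) : ℝ :=
  (1 + σ W) * V * (1 - U + σ W * U)

/-- The vector field `F` on the cube `[0,1]³` in coordinates `(U,V,Ω)`. -/
noncomputable def Ffield (Υ σ f : ℝ → ℝ) (U V W : ℝ) : ℝ × ℝ × ℝ :=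
  (U * (1 - U) * ((1 - V) * (3 - 4 * U) - Υ W * Hfun σ U V W),
   V * (1 - V) * ((2 * U - 1) * (1 - V + 2 * σ W * V) + (1 - Υ W) * Hfun σ U V W),
   -(f W) * W * (1 - W) * Hfun σ U V W)

section RealCalculus

variable {φ φ' : ℝ → ℝ}

theorem mul_sub_le_sub_of_le_hasDerivAt {D : Set ℝ} (hD : Convex ℝ D)
    (hφ : ∀ t, HasDerivAt φ (φ' t) t) {C : ℝ} (hC : ∀ t ∈ D, C ≤ φ' t)
    {a b : ℝ} (ha : a ∈ D) (hb : b ∈ D) (hab : a ≤ b) : C * (b - a) ≤ φ b - φ a :=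
  hD.mul_sub_le_image_sub_of_le_deriv (fun t _ => (hφ t).continuousAt.continuousWithinAt)
    (fun t _ => (hφ t).differentiableAt.differentiableWithinAt)
    (fun t ht => (hφ t).deriv ▸ hC t (interior_subset ht)) a ha b hb hab

theorem monotoneOn_Ici_of_hasDerivAt_nonneg (hφ : ∀ t, HasDerivAt φ (φ' t) t) {T : ℝ}
    (h : ∀ t ≥ T, 0 ≤ φ' t) : MonotoneOn φ (Ici T) := fun a ha b hb hab => by
  linarith [mul_sub_le_sub_of_le_hasDerivAt (convex_Ici T) hφ h ha hb hab]

theorem tendsto_atTop_of_eventually_le_deriv (hφ : ∀ t, HasDerivAt φ (φ' t) t) {κ : ℝ}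
    (hκ : 0 < κ) (h : ∀ᶠ t in atTop, κ ≤ φ' t) : Tendsto φ atTop atTop := by
  obtain ⟨T, hT⟩ := eventually_atTop.1 h
  refine tendsto_atTop_mono' _ (eventually_atTop.2 ⟨T, fun t ht => ?_⟩)
    (tendsto_atTop_add_const_left _ (φ T)
      ((tendsto_atTop_add_const_right _ (-T) tendsto_id).const_mul_atTop hκ))
  have := mul_sub_le_sub_of_le_hasDerivAt (convex_Ici T) hφ hT self_mem_Ici ht ht
  simp only [id]
  linarith

theorem tendsto_atBot_of_eventually_deriv_le (hφ : ∀ t, HasDerivAt φ (φ' t) t) {κ : ℝ}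
    (hκ : 0 < κ) (h : ∀ᶠ t in atTop, φ' t ≤ -κ) : Tendsto φ atTop atBot :=
  tendsto_neg_atTop_iff.1 <| tendsto_atTop_of_eventually_le_deriv (fun t => (hφ t).neg) hκ
    (h.mono fun _ ht => le_neg_of_le_neg ht)

theorem exists_tendsto_or_tendsto_atTop_of_deriv_nonneg (hφ : ∀ t, HasDerivAt φ (φ' t) t)
    (h : ∀ᶠ t in atTop, 0 ≤ φ' t) :
    (∃ l, Tendsto φ atTop (𝓝 l)) ∨ Tendsto φ atTop atTop := by
  obtain ⟨T, hT⟩ := eventually_atTop.1 h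
  have hmono : Monotone fun t => φ (max T t) := fun a b hab =>
    monotoneOn_Ici_of_hasDerivAt_nonneg hφ hT (le_max_left T a) (le_max_left T b)
      (max_le_max_left T hab)
  have heq : (fun t => φ (max T t)) =ᶠ[atTop] φ :=
    eventually_atTop.2 ⟨T, fun t ht => by simp only [max_eq_right ht]⟩
  by_cases hb : BddAbove (range fun t => φ (max T t))
  · exact .inl ⟨_, (tendsto_atTop_ciSup hmono hb).congr' heq⟩
  · exact .inr ((tendsto_atTop_atTop_of_monotone' hmono hb).congr' heq)

theorem exists_tendsto_of_deriv_nonneg_of_le (hφ : ∀ t, HasDerivAt φ (φ' t) t)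
    (h : ∀ᶠ t in atTop, 0 ≤ φ' t) {B : ℝ} (hB : ∀ᶠ t in atTop, φ t ≤ B) :
    ∃ l, Tendsto φ atTop (𝓝 l) := by
  refine (exists_tendsto_or_tendsto_atTop_of_deriv_nonneg hφ h).resolve_right fun hat => ?_
  obtain ⟨t, h₁, h₂⟩ := ((hat.eventually_gt_atTop B).and hB).exists
  exact h₁.not_ge h₂

/-- `φ - Q` increases and is bounded above by the decreasing `φ + Q`. -/
theorem exists_tendsto_of_abs_deriv_le {Q Q' : ℝ → ℝ} (hφ : ∀ t, HasDerivAt φ (φ' t) t)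
    (hQ : ∀ t, HasDerivAt Q (Q' t) t) (hQ0 : ∀ t, 0 ≤ Q t)
    (h : ∀ᶠ t in atTop, |φ' t| ≤ -Q' t) : ∃ l, Tendsto φ atTop (𝓝 l) := by
  obtain ⟨T, hT⟩ := eventually_atTop.1 h
  obtain ⟨q, hq⟩ := exists_tendsto_of_deriv_nonneg_of_le (B := 0) (fun t => (hQ t).neg)
    (h.mono fun t ht => by linarith [abs_nonneg (φ' t)])
    (Eventually.of_forall fun t => neg_nonpos.2 (hQ0 t))
  have hdec : ∀ t ≥ T, φ t + Q t ≤ φ T + Q T := fun t ht => by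
    have := mul_sub_le_sub_of_le_hasDerivAt (convex_Ici T) (fun t => ((hφ t).add (hQ t)).neg)
      (C := 0) (fun t ht => by linarith [le_abs_self (φ' t), hT t ht]) self_mem_Ici ht ht
    simp only [Pi.neg_apply, Pi.add_apply] at this
    linarith
  obtain ⟨p, hp⟩ := exists_tendsto_of_deriv_nonneg_of_le (B := φ T + Q T)
    (fun t => (hφ t).sub (hQ t))
    (eventually_atTop.2 ⟨T, fun t ht => by linarith [neg_abs_le (φ' t), hT t ht]⟩)
    (eventually_atTop.2 ⟨T, fun t ht => by
      simp only [Pi.sub_apply]; linarith [hdec t ht, hQ0 t]⟩)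
  exact ⟨p - q, (hp.sub hq).congr fun t => by simp⟩

theorem le_max_of_deriv_nonpos_of_le (hφ : ∀ t, HasDerivAt φ (φ' t) t) {c : ℝ}
    (h : ∀ t, c ≤ φ t → φ' t ≤ 0) {s t : ℝ} (hst : s ≤ t) :
    φ t ≤ max c (φ s) := by
  set M := max c (φ s)
  have fence : ∀ ε > 0, φ t ≤ M + ε * (t - s) := fun ε hε =>
    image_le_of_deriv_right_lt_deriv_boundary (B := fun r => M + ε * (r - s))
      (fun r _ => (hφ r).continuousAt.continuousWithinAt) (fun r _ => (hφ r).hasDerivWithinAt)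
      (by simp [M])
      (fun r => by simpa using ((hasDerivAt_id r).sub_const s).const_mul ε |>.const_add M)
      (fun r hr _ => (h r (by nlinarith [le_max_left c (φ s), hr.1])).trans_lt hε)
      ⟨hst, le_rfl⟩
  refine le_of_forall_pos_le_add fun δ hδ => (fence (δ / (t - s + 1)) (by positivity)).trans ?_
  have : δ / (t - s + 1) * (t - s) ≤ δ := by
    rw [div_mul_eq_mul_div, div_le_iff₀ (by linarith)]; nlinarith
  linarith

/-- Barbalat-type lemma: if `q t ≥ ε`, then `q ≥ ε/2` on `[t, t + ε/(2K)]`, where `φ` gains a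
fixed amount; the convergence of `φ` forbids this for large `t`. -/
theorem tendsto_zero_of_le_deriv_of_tendsto {q q' : ℝ → ℝ} {K l : ℝ}
    (hq : ∀ t, HasDerivAt q (q' t) t) (hq' : ∀ t, -K ≤ q' t) (hq0 : ∀ t, 0 ≤ q t)
    (hφ : ∀ t, HasDerivAt φ (φ' t) t) (hφl : Tendsto φ atTop (𝓝 l))
    (h : ∀ δ > 0, ∃ η > 0, ∀ᶠ t in atTop, δ ≤ q t → η ≤ φ' t) :
    Tendsto q atTop (𝓝 0) := by
  refine tendsto_order.2 ⟨fun a ha => Eventually.of_forall fun t => ha.trans_le (hq0 t),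
    fun ε hε => ?_⟩
  set K' := max K 1
  set τ := ε / (2 * K')
  have hK' : 0 < K' := lt_max_of_lt_right one_pos
  have hτ : 0 < τ := by positivity
  obtain ⟨η, hη, hφ'⟩ := h (ε / 2) (by positivity)
  have hinc : Tendsto (fun t => φ (t + τ) - φ t) atTop (𝓝 (l - l)) :=
    (hφl.comp (tendsto_atTop_add_const_right _ τ tendsto_id)).sub hφl
  rw [sub_self] at hinc
  obtain ⟨N, hN⟩ := eventually_atTop.1 hφ'
  filter_upwards [hinc.eventually (eventually_lt_nhds (mul_pos hη hτ)),
    eventually_ge_atTop N] with t hsmall htN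
  by_contra! hqt
  have hq_half : ∀ r ∈ Icc t (t + τ), ε / 2 ≤ q r := fun r hr => by
    have := mul_sub_le_sub_of_le_hasDerivAt (convex_Icc t r) hq (C := -K')
      (fun r _ => (le_max_left K 1 |> neg_le_neg).trans (hq' r)) (left_mem_Icc.2 hr.1)
      (right_mem_Icc.2 hr.1) hr.1
    have : K' * (r - t) ≤ ε / 2 := by
      calc K' * (r - t) ≤ K' * τ := by gcongr; linarith [hr.2]
        _ = ε / 2 := by simp only [τ]; field_simp
    linarith
  have := mul_sub_le_sub_of_le_hasDerivAt (convex_Icc t (t + τ)) hφ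
    (fun r hr => hN r (htN.trans hr.1) (hq_half r hr)) (left_mem_Icc.2 (by linarith))
    (right_mem_Icc.2 (by linarith)) (by linarith)
  simp only [add_sub_cancel_left] at this
  linarith

end RealCalculus

noncomputable def logit (r : ℝ) : ℝ := Real.log r - Real.log (1 - r)

theorem sigmoid_logit {r : ℝ} (hr : r ∈ Ioo (0:ℝ) 1) : Real.sigmoid (logit r) = r := by
  have h1 : 0 < 1 - r := sub_pos.2 hr.2
  have h0 : r ≠ 0 := hr.1.ne'
  rw [Real.sigmoid_def, logit, neg_sub, Real.exp_sub, Real.exp_log h1, Real.exp_log hr.1]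
  field_simp
  ring

theorem log_le_logit {r : ℝ} (hr : r ∈ Icc (0:ℝ) 1) : Real.log r ≤ logit r := by
  have := Real.log_nonpos (sub_nonneg.2 hr.2) (by linarith [hr.1])
  unfold logit; linarith

theorem logit_le_neg_log_one_sub {r : ℝ} (hr : r ∈ Icc (0:ℝ) 1) :
    logit r ≤ -Real.log (1 - r) := by
  have := Real.log_nonpos hr.1 hr.2
  unfold logit; linarith

theorem HasDerivAt.logit {r : ℝ → ℝ} {D t : ℝ} (h : HasDerivAt r (r t * (1 - r t) * D) t)
    (hr : r t ∈ Ioo (0:ℝ) 1) : HasDerivAt (fun t => logit (r t)) D t := by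
  have h0 : r t ≠ 0 := hr.1.ne'
  have h1 : 1 - r t ≠ 0 := (sub_pos.2 hr.2).ne'
  refine ((h.log h0).sub ((h.const_sub 1).log h1)).congr_deriv ?_
  field_simp
  ring

theorem Filter.Tendsto.of_logit {α : Type*} {r : α → ℝ} {l : Filter α} {F : Filter ℝ}
    {z : ℝ} (hr : ∀ t, r t ∈ Ioo (0:ℝ) 1) (h : Tendsto (fun t => logit (r t)) l F)
    (hF : Tendsto Real.sigmoid F (𝓝 z)) : Tendsto r l (𝓝 z) :=
  (hF.comp h).congr fun t => sigmoid_logit (hr t)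

/-- An interior orbit `(u, v, w) = (U, V, Ω)`, with a lower bound `m` of `f` and a Lipschitz
constant `L` of `σ` and `Υ` at `0`. -/
structure Orbit where
  Υ : ℝ → ℝ
  σ : ℝ → ℝ
  f : ℝ → ℝ
  u : ℝ → ℝ
  v : ℝ → ℝ
  w : ℝ → ℝ
  m : ℝ
  L : ℝ
  hasDerivAt_u : ∀ t, HasDerivAt u (Ffield Υ σ f (u t) (v t) (w t)).1 t
  hasDerivAt_v : ∀ t, HasDerivAt v (Ffield Υ σ f (u t) (v t) (w t)).2.1 t
  hasDerivAt_w : ∀ t, HasDerivAt w (Ffield Υ σ f (u t) (v t) (w t)).2.2 t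
  mem_Ioo : ∀ t, u t ∈ Ioo (0:ℝ) 1 ∧ v t ∈ Ioo (0:ℝ) 1 ∧ w t ∈ Ioo (0:ℝ) 1
  m_pos : 0 < m
  m_le_f : ∀ x ∈ Icc (0:ℝ) 1, m ≤ f x
  σ_nonneg : ∀ x ∈ Icc (0:ℝ) 1, 0 ≤ σ x
  σ_le : ∀ x ∈ Icc (0:ℝ) 1, σ x ≤ L * x
  Υ_nonneg : ∀ x ∈ Icc (0:ℝ) 1, 0 ≤ Υ x
  abs_Υ_sub_le : ∀ x ∈ Icc (0:ℝ) 1, |Υ x - Υ 0| ≤ L * x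

namespace Orbit

section Pointwise

variable (c : Orbit) (t : ℝ)

noncomputable def s : ℝ := c.σ (c.w t)
noncomputable def p : ℝ := c.Υ (c.w t)
noncomputable def F : ℝ := c.f (c.w t)
noncomputable def H : ℝ := Hfun c.σ (c.u t) (c.v t) (c.w t)
noncomputable def A : ℝ := (1 - c.v t) * (3 - 4 * c.u t) - c.p t * c.H t
noncomputable def B : ℝ :=
  (2 * c.u t - 1) * (1 - c.v t + 2 * c.s t * c.v t) + (1 - c.p t) * c.H t

theorem u_mem : c.u t ∈ Ioo (0:ℝ) 1 := (c.mem_Ioo t).1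
theorem v_mem : c.v t ∈ Ioo (0:ℝ) 1 := (c.mem_Ioo t).2.1
theorem w_mem : c.w t ∈ Ioo (0:ℝ) 1 := (c.mem_Ioo t).2.2

theorem s_nonneg : 0 ≤ c.s t := c.σ_nonneg _ (Ioo_subset_Icc_self (c.w_mem t))
theorem s_le : c.s t ≤ c.L * c.w t := c.σ_le _ (Ioo_subset_Icc_self (c.w_mem t))
theorem p_nonneg : 0 ≤ c.p t := c.Υ_nonneg _ (Ioo_subset_Icc_self (c.w_mem t))
theorem abs_p_sub_le : |c.p t - c.Υ 0| ≤ c.L * c.w t :=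
  c.abs_Υ_sub_le _ (Ioo_subset_Icc_self (c.w_mem t))
theorem m_le_F : c.m ≤ c.F t := c.m_le_f _ (Ioo_subset_Icc_self (c.w_mem t))

theorem L_nonneg : 0 ≤ c.L :=
  nonneg_of_mul_nonneg_left ((abs_nonneg _).trans (c.abs_p_sub_le 0)) (c.w_mem 0).1

theorem p_le : c.p t ≤ c.Υ 0 + c.L * c.w t := by
  linarith [le_abs_self (c.p t - c.Υ 0), c.abs_p_sub_le t]

theorem H_eq : c.H t = (1 + c.s t) * c.v t * (1 - c.u t + c.s t * c.u t) := rfl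

theorem v_mul_one_sub_u_le_H : c.v t * (1 - c.u t) ≤ c.H t := by
  obtain ⟨⟨hu0, hu1⟩, ⟨hv0, -⟩, -⟩ := c.mem_Ioo t
  have hs := c.s_nonneg t
  rw [H_eq]
  nlinarith [mul_nonneg (mul_nonneg hs hv0.le) (sub_nonneg.2 hu1.le),
    mul_nonneg (mul_nonneg (mul_nonneg hs hs) hv0.le) hu0.le,
    mul_nonneg (mul_nonneg hs hv0.le) hu0.le]

theorem H_pos : 0 < c.H t :=
  (mul_pos (c.v_mem t).1 (sub_pos.2 (c.u_mem t).2)).trans_le (c.v_mul_one_sub_u_le_H t)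

theorem s_mul_v_le_H : c.s t * c.v t ≤ c.H t := by
  obtain ⟨⟨hu0, hu1⟩, ⟨hv0, -⟩, -⟩ := c.mem_Ioo t
  have hs := c.s_nonneg t
  rw [H_eq]
  nlinarith [mul_nonneg (mul_nonneg hs hv0.le) (sub_nonneg.2 hu1.le),
    mul_nonneg (mul_nonneg (mul_nonneg hs hs) hv0.le) hu0.le,
    mul_nonneg (mul_nonneg hs hv0.le) hu0.le]

theorem H_le : c.H t ≤ (1 + c.L) ^ 2 := by
  obtain ⟨⟨hu0, hu1⟩, ⟨hv0, hv1⟩, -, hw1⟩ := c.mem_Ioo t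
  have hs := c.s_nonneg t
  have hsL : c.s t ≤ c.L := (c.s_le t).trans (mul_le_of_le_one_right c.L_nonneg hw1.le)
  have h1 : 1 - c.u t + c.s t * c.u t ≤ 1 + c.L := by nlinarith
  have h2 : 0 ≤ 1 - c.u t + c.s t * c.u t := by nlinarith
  rw [H_eq, sq]
  calc (1 + c.s t) * c.v t * (1 - c.u t + c.s t * c.u t)
      ≤ (1 + c.L) * 1 * (1 + c.L) := by gcongr <;> linarith [c.L_nonneg]
    _ = (1 + c.L) * (1 + c.L) := by ring

theorem B_le : c.B t ≤ 1 + 2 * c.L + (1 + c.L) ^ 2 := by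
  obtain ⟨⟨hu0, hu1⟩, ⟨hv0, hv1⟩, -, hw1⟩ := c.mem_Ioo t
  have hs := c.s_nonneg t
  have hsL : c.s t ≤ c.L := (c.s_le t).trans (mul_le_of_le_one_right c.L_nonneg hw1.le)
  have hH := c.H_pos t
  have hp := c.p_nonneg t
  have hX : 0 ≤ 1 - c.v t + 2 * c.s t * c.v t := by nlinarith
  unfold B
  nlinarith [c.H_le t, mul_le_mul_of_nonneg_right (show 2 * c.u t - 1 ≤ 1 by linarith) hX]

theorem hasDerivAt_u' : HasDerivAt c.u (c.u t * (1 - c.u t) * c.A t) t := c.hasDerivAt_u t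

theorem hasDerivAt_v' : HasDerivAt c.v (c.v t * (1 - c.v t) * c.B t) t := c.hasDerivAt_v t

theorem hasDerivAt_w' : HasDerivAt c.w (c.w t * (1 - c.w t) * -(c.F t * c.H t)) t :=
  (c.hasDerivAt_w t).congr_deriv (by simp only [Ffield, F, H]; ring)

theorem hasDerivAt_logit_u : HasDerivAt (fun t => logit (c.u t)) (c.A t) t :=
  (c.hasDerivAt_u' t).logit (c.u_mem t)

theorem hasDerivAt_logit_v : HasDerivAt (fun t => logit (c.v t)) (c.B t) t :=
  (c.hasDerivAt_v' t).logit (c.v_mem t)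

theorem hasDerivAt_logit_w : HasDerivAt (fun t => logit (c.w t)) (-(c.F t * c.H t)) t :=
  (c.hasDerivAt_w' t).logit (c.w_mem t)

theorem hasDerivAt_log_v : HasDerivAt (fun t => Real.log (c.v t)) ((1 - c.v t) * c.B t) t :=
  ((c.hasDerivAt_v' t).log (c.v_mem t).1.ne').congr_deriv (by field_simp [(c.v_mem t).1.ne'])

theorem deriv_w_nonpos : c.w t * (1 - c.w t) * -(c.F t * c.H t) ≤ 0 :=
  mul_nonpos_of_nonneg_of_nonpos
    (mul_nonneg (c.w_mem t).1.le (sub_nonneg.2 (c.w_mem t).2.le))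
    (neg_nonpos.2 (mul_pos (c.m_pos.trans_le (c.m_le_F t)) (c.H_pos t)).le)

theorem A_nonpos (hu : 3 / 4 ≤ c.u t) : c.A t ≤ 0 := by
  have := mul_nonneg (c.p_nonneg t) (c.H_pos t).le
  unfold A; nlinarith [(c.v_mem t).2]

theorem two_mul_le_deriv_of_u_le {a : ℝ} (ha : 0 < a) (hu : c.u t ≤ 1 - a) :
    2 * a ≤ c.A t + (1 - c.v t) * c.B t +
      (2 * (c.Υ 0 + c.L) + 2 + (1 + 2 * a) / a) / c.m * (c.F t * c.H t) := by
  obtain ⟨⟨hu0, hu1⟩, ⟨hv0, hv1⟩, -⟩ := c.mem_Ioo t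
  have hH := c.H_pos t
  have hp := c.p_nonneg t
  have hs := c.s_nonneg t
  have hP : c.p t ≤ c.Υ 0 + c.L := (c.p_le t).trans (by nlinarith [c.L_nonneg, (c.w_mem t).2])
  set K := 2 * (c.Υ 0 + c.L) + 2 + (1 + 2 * a) / a
  have hK : 0 ≤ K := by have := c.Υ_nonneg 0 (by simp); have := c.L_nonneg; positivity
  have e1 : (1 - c.v t) * (2 * a - c.v t) ≤
      (1 - c.v t) * ((3 - 4 * c.u t) + (2 * c.u t - 1) * (1 - c.v t)) :=
    mul_le_mul_of_nonneg_left (by nlinarith) (by linarith)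
  have e2 : -(2 * c.H t) ≤ (1 - c.v t) * (2 * c.u t - 1) * (2 * c.s t * c.v t) := by
    have : -1 ≤ (1 - c.v t) * (2 * c.u t - 1) := by nlinarith
    nlinarith [c.s_mul_v_le_H t, mul_nonneg hs hv0.le]
  have e3 : -(2 * (c.Υ 0 + c.L) * c.H t) ≤
      -(c.p t * c.H t) + (1 - c.v t) * ((1 - c.p t) * c.H t) := by
    nlinarith [mul_nonneg (mul_nonneg hv0.le hp) hH.le, mul_le_mul_of_nonneg_right hP hH.le]
  have e4 : K * c.H t ≤ K / c.m * (c.F t * c.H t) := by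
    rw [div_mul_eq_mul_div, le_div_iff₀ c.m_pos]
    nlinarith [mul_le_mul_of_nonneg_left (c.m_le_F t) (mul_nonneg hK hH.le)]
  have e5 : (1 + 2 * a) * c.v t ≤ (1 + 2 * a) / a * c.H t := by
    have : a * c.v t ≤ c.H t := by nlinarith [c.v_mul_one_sub_u_le_H t]
    rw [div_mul_eq_mul_div, le_div_iff₀ ha]
    nlinarith
  have : c.A t + (1 - c.v t) * c.B t =
      (1 - c.v t) * ((3 - 4 * c.u t) + (2 * c.u t - 1) * (1 - c.v t))
      + (1 - c.v t) * (2 * c.u t - 1) * (2 * c.s t * c.v t)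
      + (-(c.p t * c.H t) + (1 - c.v t) * ((1 - c.p t) * c.H t)) := by unfold A B; ring
  nlinarith [sq_nonneg (c.v t)]

theorem two_mul_le_deriv_G (h34 : c.Υ 0 ≤ 3 / 4) (hw : c.w t ≤ 1 / 2) :
    2 * c.u t * (1 - c.v t) ≤
      c.A t + 3 * c.B t + 20 * c.L / c.m * (c.F t * c.H t * c.w t * (1 - c.w t)) := by
  obtain ⟨⟨hu0, hu1⟩, ⟨hv0, hv1⟩, hw0, -⟩ := c.mem_Ioo t
  have hH := c.H_pos t
  have hs := c.s_nonneg t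
  have hL := c.L_nonneg
  have hX : 0 ≤ c.L * c.w t * c.H t := by positivity
  have e1 : -(6 * (c.L * c.w t * c.H t)) ≤ 6 * (2 * c.u t - 1) * c.s t * c.v t := by
    have h1 : (1 - c.u t) * (c.s t * c.v t) ≤ (1 - c.u t) * (c.L * c.w t * c.v t) :=
      mul_le_mul_of_nonneg_left (mul_le_mul_of_nonneg_right (c.s_le t) hv0.le) (by linarith)
    have h2 := mul_le_mul_of_nonneg_left (c.v_mul_one_sub_u_le_H t) (mul_nonneg hL hw0.le)
    nlinarith [mul_nonneg hs hv0.le]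
  have e2 : -(4 * (c.L * c.w t * c.H t)) ≤ (3 - 4 * c.p t) * c.H t := by
    nlinarith [mul_le_mul_of_nonneg_right (c.p_le t) hH.le]
  have e3 : 10 * (c.L * c.w t * c.H t) ≤
      20 * c.L / c.m * (c.F t * c.H t * c.w t * (1 - c.w t)) := by
    have : c.m * (1 / 2) ≤ c.F t * (1 - c.w t) :=
      mul_le_mul (c.m_le_F t) (by linarith) (by norm_num) (c.m_pos.trans_le (c.m_le_F t)).le
    rw [div_mul_eq_mul_div, le_div_iff₀ c.m_pos]
    nlinarith [mul_le_mul_of_nonneg_left this (by positivity : 0 ≤ 20 * c.L * c.w t * c.H t)]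
  have : c.A t + 3 * c.B t =
      2 * c.u t * (1 - c.v t) + 6 * (2 * c.u t - 1) * c.s t * c.v t + (3 - 4 * c.p t) * c.H t := by
    unfold A B; ring
  linarith

theorem neg_le_deriv_one_sub_v :
    -(1 + 2 * c.L + (1 + c.L) ^ 2) ≤ -(c.v t * (1 - c.v t) * c.B t) := by
  obtain ⟨hv0, hv1⟩ := c.v_mem t
  have hB := c.B_le t
  have : 0 ≤ 1 + 2 * c.L + (1 + c.L) ^ 2 := by have := c.L_nonneg; positivity
  have hv : 0 ≤ c.v t * (1 - c.v t) := mul_nonneg hv0.le (sub_nonneg.2 hv1.le)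
  rcases le_total (c.B t) 0 with h | h
  · nlinarith [mul_nonpos_of_nonneg_of_nonpos hv h]
  · nlinarith [mul_le_mul_of_nonneg_right (show c.v t * (1 - c.v t) ≤ 1 by nlinarith) h]

theorem abs_A_le (h0 : c.Υ 0 = 0) : |c.A t| ≤ 3 * (1 - c.v t) + c.L * c.w t * c.H t := by
  obtain ⟨⟨hu0, hu1⟩, ⟨hv0, hv1⟩, -⟩ := c.mem_Ioo t
  have hH := c.H_pos t
  have hp := c.p_nonneg t
  have hpw : c.p t ≤ c.L * c.w t := by simpa [h0] using c.p_le t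
  have e1 := mul_le_mul_of_nonneg_right hpw hH.le
  have e2 := mul_nonneg hp hH.le
  unfold A
  rw [abs_le]
  constructor <;> nlinarith

theorem le_B (h0 : c.Υ 0 = 0) {a : ℝ} (ha : 0 < a) (hu : c.u t ≤ 1 - a)
    (hv : 1 - c.v t ≤ min (1 / 2) (a / 16)) (hw : c.L * c.w t ≤ min (1 / 2) (a / 32)) :
    a / 8 ≤ c.B t := by
  obtain ⟨⟨hu0, hu1⟩, ⟨hv0, hv1⟩, -⟩ := c.mem_Ioo t
  have hv' := hv.trans (min_le_left _ _)
  have hv'' := hv.trans (min_le_right _ _)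
  have hw' := hw.trans (min_le_left _ _)
  have hw'' := hw.trans (min_le_right _ _)
  have hs := c.s_nonneg t
  have hpw : c.p t ≤ c.L * c.w t := by simpa [h0] using c.p_le t
  have hH : a / 2 ≤ c.H t := by nlinarith [c.v_mul_one_sub_u_le_H t]
  have e1 : -(1 - c.v t + 2 * c.s t * c.v t) ≤
      (2 * c.u t - 1) * (1 - c.v t + 2 * c.s t * c.v t) := by
    nlinarith [mul_nonneg hs hv0.le]
  have e2 : 2 * c.s t * c.v t ≤ a / 16 := by nlinarith [c.s_le t]
  have e3 : a / 4 ≤ (1 - c.p t) * c.H t := by nlinarith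
  unfold B
  linarith

theorem abs_A_le_of_Υ_eq_zero (h0 : c.Υ 0 = 0) {a : ℝ} (ha : 0 < a) (hu : c.u t ≤ 1 - a)
    (hv : 1 - c.v t ≤ min (1 / 2) (a / 16)) (hLw : c.L * c.w t ≤ min (1 / 2) (a / 32))
    (hw : c.w t ≤ 1 / 2) :
    |c.A t| ≤ -(24 / a * -((1 - c.v t) * c.B t) +
      2 * c.L / c.m * (c.w t * (1 - c.w t) * -(c.F t * c.H t))) := by
  have hB := c.le_B t h0 ha hu hv hLw
  have e1 : 3 * (1 - c.v t) ≤ 24 / a * ((1 - c.v t) * c.B t) := by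
    rw [div_mul_eq_mul_div, le_div_iff₀ ha]
    nlinarith [mul_le_mul_of_nonneg_left hB (sub_nonneg.2 (c.v_mem t).2.le)]
  have e2 : c.L * c.w t * c.H t ≤ 2 * c.L / c.m * (c.w t * (1 - c.w t) * (c.F t * c.H t)) := by
    have hF : c.m * (1 / 2) ≤ c.F t * (1 - c.w t) :=
      mul_le_mul (c.m_le_F t) (by linarith) (by norm_num) (c.m_pos.trans_le (c.m_le_F t)).le
    have := c.L_nonneg; have := c.H_pos t; have := (c.w_mem t).1
    rw [div_mul_eq_mul_div, le_div_iff₀ c.m_pos]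
    nlinarith [mul_le_mul_of_nonneg_left hF (by positivity : 0 ≤ 2 * c.L * c.w t * c.H t)]
  linarith [c.abs_A_le t h0]

noncomputable def G : ℝ := logit (c.u t) + 3 * logit (c.v t) - 20 * c.L / c.m * c.w t

theorem hasDerivAt_G : HasDerivAt c.G
    (c.A t + 3 * c.B t + 20 * c.L / c.m * (c.F t * c.H t * c.w t * (1 - c.w t))) t :=
  (((c.hasDerivAt_logit_u t).add ((c.hasDerivAt_logit_v t).const_mul 3)).sub
    ((c.hasDerivAt_w' t).const_mul _)).congr_deriv (by ring)

theorem G_le : c.G t ≤ logit (c.u t) + 3 * logit (c.v t) := by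
  have := c.L_nonneg; have := c.m_pos; have := (c.w_mem t).1
  unfold G; linarith [show 0 ≤ 20 * c.L / c.m * c.w t by positivity]

theorem two_mul_u_mul_nonneg : 0 ≤ 2 * c.u t * (1 - c.v t) :=
  mul_nonneg (mul_nonneg zero_le_two (c.u_mem t).1.le) (sub_nonneg.2 (c.v_mem t).2.le)

end Pointwise

variable (c : Orbit)

theorem u_le_max {s t : ℝ} (hst : s ≤ t) : c.u t ≤ max (3 / 4) (c.u s) :=
  le_max_of_deriv_nonpos_of_le c.hasDerivAt_u' (fun t hu => mul_nonpos_of_nonneg_of_nonpos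
    (mul_nonneg (c.u_mem t).1.le (sub_nonneg.2 (c.u_mem t).2.le)) (c.A_nonpos t hu)) hst

theorem exists_eventually_u_le : ∃ a > 0, ∀ᶠ t in atTop, c.u t ≤ 1 - a :=
  ⟨1 - max (3 / 4) (c.u 0), sub_pos.2 (max_lt (by norm_num) (c.u_mem 0).2),
    (eventually_ge_atTop 0).mono fun t ht => by linarith [c.u_le_max ht]⟩

theorem logit_u_le {a t : ℝ} (ha : 0 < a) (hu : c.u t ≤ 1 - a) :
    logit (c.u t) ≤ -Real.log a :=
  (logit_le_neg_log_one_sub (Ioo_subset_Icc_self (c.u_mem t))).trans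
    (neg_le_neg (Real.log_le_log ha (by linarith)))

theorem antitone_w : Antitone c.w :=
  antitone_of_deriv_nonpos (fun t => (c.hasDerivAt_w' t).differentiableAt)
    (fun t => (c.hasDerivAt_w' t).deriv ▸ c.deriv_w_nonpos t)

theorem false_of_forall_le_w {ε : ℝ} (hε : 0 < ε) (h : ∀ t, ε ≤ c.w t) : False := by
  obtain ⟨a, ha, hu⟩ := c.exists_eventually_u_le
  set K := (2 * (c.Υ 0 + c.L) + 2 + (1 + 2 * a) / a) / c.m
  have hK : 0 ≤ K := by
    have := c.Υ_nonneg 0 (by simp); have := c.L_nonneg; have := c.m_pos; positivity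
  have hΨ : ∀ t, HasDerivAt (fun t => logit (c.u t) + Real.log (c.v t) - K * logit (c.w t))
      (c.A t + (1 - c.v t) * c.B t + K * (c.F t * c.H t)) t := fun t =>
    (((c.hasDerivAt_logit_u t).add (c.hasDerivAt_log_v t)).sub
      ((c.hasDerivAt_logit_w t).const_mul K)).congr_deriv (by ring)
  have hΨ_top := tendsto_atTop_of_eventually_le_deriv hΨ (mul_pos two_pos ha)
    (hu.mono fun t ht => c.two_mul_le_deriv_of_u_le t ha ht)
  obtain ⟨t, hbig, hut⟩ :=
    ((hΨ_top.eventually_gt_atTop (-Real.log a - K * Real.log ε)).and hu).exists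
  have h1 := c.logit_u_le ha hut
  have h2 : Real.log (c.v t) ≤ 0 := Real.log_nonpos (c.v_mem t).1.le (c.v_mem t).2.le
  have h3 : Real.log ε ≤ logit (c.w t) :=
    (Real.log_le_log hε (h t)).trans (log_le_logit (Ioo_subset_Icc_self (c.w_mem t)))
  nlinarith [mul_le_mul_of_nonneg_left h3 hK]

theorem tendsto_w : Tendsto c.w atTop (𝓝 0) := by
  have hbdd : BddBelow (range c.w) := ⟨0, by rintro _ ⟨t, rfl⟩; exact (c.w_mem t).1.le⟩
  have hlim := tendsto_atTop_ciInf c.antitone_w hbdd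
  rcases (le_ciInf fun t => (c.w_mem t).1.le : 0 ≤ ⨅ t, c.w t).eq_or_lt with h | h
  · rwa [← h] at hlim
  · exact (c.false_of_forall_le_w h fun t => ciInf_le hbdd t).elim

theorem tendsto_p : Tendsto c.p atTop (𝓝 (c.Υ 0)) := by
  have hLw : Tendsto (fun t => c.L * c.w t) atTop (𝓝 0) := by
    simpa using c.tendsto_w.const_mul c.L
  exact tendsto_iff_dist_tendsto_zero.2
    (squeeze_zero (fun _ => dist_nonneg) (fun t => (c.abs_p_sub_le t)) hLw)

theorem eventually_two_mul_le_deriv_G (h34 : c.Υ 0 ≤ 3 / 4) : ∀ᶠ t in atTop,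
    2 * c.u t * (1 - c.v t) ≤
      c.A t + 3 * c.B t + 20 * c.L / c.m * (c.F t * c.H t * c.w t * (1 - c.w t)) :=
  (c.tendsto_w.eventually (eventually_le_nhds (by norm_num : (0:ℝ) < 1 / 2))).mono
    fun t ht => c.two_mul_le_deriv_G t h34 ht

/-- Barbalat's argument applied to `1 - v`: the lower bound `G ≥ G T` keeps `u` away from `0`
while `v` is away from `1`, and then `G` grows at a definite rate. -/
theorem tendsto_v_of_tendsto_G (h34 : c.Υ 0 ≤ 3 / 4) {l : ℝ}
    (hl : Tendsto c.G atTop (𝓝 l)) :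
    Tendsto c.v atTop (𝓝 1) := by
  obtain ⟨T, hT⟩ := eventually_atTop.1 (c.eventually_two_mul_le_deriv_G h34)
  have hG_ge : ∀ t ≥ T, c.G T ≤ c.G t := fun t ht =>
    monotoneOn_Ici_of_hasDerivAt_nonneg c.hasDerivAt_G
      (fun t ht => (c.two_mul_u_mul_nonneg t).trans (hT t ht)) self_mem_Ici ht ht
  have hq := tendsto_zero_of_le_deriv_of_tendsto (fun t => (c.hasDerivAt_v' t).const_sub 1)
    c.neg_le_deriv_one_sub_v (fun t => sub_nonneg.2 (c.v_mem t).2.le) c.hasDerivAt_G hl ?_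
  · simpa using (tendsto_const_nhds (x := (1:ℝ))).sub hq
  intro δ hδ
  set γ := c.G T + 3 * Real.log δ
  refine ⟨2 * Real.sigmoid γ * δ, by have := Real.sigmoid_pos γ; positivity,
    eventually_atTop.2 ⟨T, fun t ht hvt => ?_⟩⟩
  have h1 : logit (c.v t) ≤ -Real.log δ :=
    (logit_le_neg_log_one_sub (Ioo_subset_Icc_self (c.v_mem t))).trans
      (neg_le_neg (Real.log_le_log hδ hvt))
  have h2 : Real.sigmoid γ ≤ c.u t :=
    sigmoid_logit (c.u_mem t) ▸ Real.sigmoid_le (by linarith [hG_ge t ht, c.G_le t])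
  calc 2 * Real.sigmoid γ * δ ≤ 2 * c.u t * (1 - c.v t) := by
        have := (c.u_mem t).1; gcongr
    _ ≤ _ := hT t ht

theorem tendsto_v_of_tendsto_G_atTop (h : Tendsto c.G atTop atTop) :
    Tendsto c.v atTop (𝓝 1) := by
  obtain ⟨a, ha, hu⟩ := c.exists_eventually_u_le
  refine .of_logit c.v_mem (tendsto_atTop_mono' _ ?_
    ((tendsto_atTop_add_const_right _ (Real.log a) h).atTop_div_const (by norm_num : (0:ℝ) < 3)))
    Real.tendsto_sigmoid_atTop
  filter_upwards [hu] with t ht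
  linarith [c.G_le t, c.logit_u_le ha ht]

theorem tendsto_v (h34 : c.Υ 0 ≤ 3 / 4) : Tendsto c.v atTop (𝓝 1) :=
  (exists_tendsto_or_tendsto_atTop_of_deriv_nonneg c.hasDerivAt_G
      ((c.eventually_two_mul_le_deriv_G h34).mono
        fun t ht => (c.two_mul_u_mul_nonneg t).trans ht)).elim
    (fun ⟨_, hl⟩ => c.tendsto_v_of_tendsto_G h34 hl) c.tendsto_v_of_tendsto_G_atTop

theorem tendsto_u_zero (h34 : c.Υ 0 ≤ 3 / 4) (hpos : 0 < c.Υ 0) :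
    Tendsto c.u atTop (𝓝 0) := by
  obtain ⟨a, ha, hu⟩ := c.exists_eventually_u_le
  have hε : 0 < min (1 / 2) (a * c.Υ 0 / 24) := lt_min (by norm_num) (by positivity)
  have hv := (c.tendsto_v h34).eventually (eventually_ge_nhds (sub_lt_self 1 hε))
  have hp := c.tendsto_p.eventually (eventually_ge_nhds (half_lt_self hpos))
  refine (tendsto_atBot_of_eventually_deriv_le c.hasDerivAt_logit_u (κ := a * c.Υ 0 / 8)
    (by positivity) ?_).of_logit c.u_mem Real.tendsto_sigmoid_atBot
  filter_upwards [hu, hv, hp] with t hut hvt hpt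
  obtain ⟨⟨hu0, hu1⟩, ⟨hv0, hv1⟩, -⟩ := c.mem_Ioo t
  have hv' : 1 - c.v t ≤ 1 / 2 := by linarith [min_le_left (1 / 2) (a * c.Υ 0 / 24)]
  have hv'' : 1 - c.v t ≤ a * c.Υ 0 / 24 := by linarith [min_le_right (1 / 2) (a * c.Υ 0 / 24)]
  have hH : a / 2 ≤ c.H t := by nlinarith [c.v_mul_one_sub_u_le_H t]
  have hpH : c.Υ 0 / 2 * (a / 2) ≤ c.p t * c.H t :=
    mul_le_mul hpt hH (by positivity) (c.p_nonneg t)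
  unfold A
  nlinarith

theorem exists_tendsto_u (h0 : c.Υ 0 = 0) : ∃ l, Tendsto c.u atTop (𝓝 l) := by
  obtain ⟨a, ha, hu⟩ := c.exists_eventually_u_le
  have hv := (c.tendsto_v (by rw [h0]; norm_num)).eventually
    (eventually_ge_nhds (sub_lt_self 1 (lt_min (by norm_num) (by positivity) :
      0 < min (1 / 2) (a / 16))))
  have hLw : Tendsto (fun t => c.L * c.w t) atTop (𝓝 0) := by
    simpa using c.tendsto_w.const_mul c.L
  have hw := hLw.eventually (eventually_le_nhds (lt_min (by norm_num) (by positivity) :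
    0 < min (1 / 2) (a / 32)))
  have hw' := c.tendsto_w.eventually (eventually_le_nhds (by norm_num : (0:ℝ) < 1 / 2))
  have hQ : ∀ t, HasDerivAt (fun t => 24 / a * -Real.log (c.v t) + 2 * c.L / c.m * c.w t)
      (24 / a * -((1 - c.v t) * c.B t) + 2 * c.L / c.m * (c.w t * (1 - c.w t) * -(c.F t * c.H t)))
      t := fun t =>
    ((c.hasDerivAt_log_v t).neg.const_mul _).add ((c.hasDerivAt_w' t).const_mul _)
  have hQ0 : ∀ t, 0 ≤ 24 / a * -Real.log (c.v t) + 2 * c.L / c.m * c.w t := fun t => by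
    have := c.L_nonneg; have := c.m_pos; have := (c.w_mem t).1
    exact add_nonneg (mul_nonneg (by positivity)
      (neg_nonneg.2 (Real.log_nonpos (c.v_mem t).1.le (c.v_mem t).2.le))) (by positivity)
  refine (exists_tendsto_of_abs_deriv_le c.hasDerivAt_logit_u hQ hQ0 ?_).elim
    fun l hl => ⟨_, hl.of_logit c.u_mem (continuous_sigmoid.tendsto l)⟩
  filter_upwards [hu, hv, hw, hw'] with t hut hvt hwt hw't
  exact c.abs_A_le_of_Υ_eq_zero t h0 ha hut (by linarith) hwt hw't

end Orbit

theorem ContDiffOn.eventually_abs_sub_le_mul {g : ℝ → ℝ} (hg : ContDiffOn ℝ 1 g (Icc 0 1)) :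
    ∀ᶠ L in atTop, ∀ x ∈ Icc (0:ℝ) 1, |g x - g 0| ≤ L * x := by
  obtain ⟨K, hK⟩ := hg.exists_lipschitzOnWith one_ne_zero (convex_Icc 0 1) isCompact_Icc
  filter_upwards [eventually_ge_atTop (K : ℝ)] with L hL x hx
  have := hK.dist_le_mul x hx 0 (left_mem_Icc.2 zero_le_one)
  rw [Real.dist_eq, Real.dist_eq, sub_zero, abs_of_nonneg hx.1] at this
  exact this.trans (mul_le_mul_of_nonneg_right hL hx.1)

theorem stmt13_general
    (Υ σ f : ℝ → ℝ)
    (hΥ : ContDiffOn ℝ 1 Υ (Icc 0 1)) (hσ : ContDiffOn ℝ 1 σ (Icc 0 1))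
    (hf : ContDiffOn ℝ 1 f (Icc 0 1))
    (hfpos : ∀ x ∈ Icc (0:ℝ) 1, 0 < f x)
    (hσnonneg : ∀ x ∈ Icc (0:ℝ) 1, 0 ≤ σ x)
    (hΥnonneg : ∀ x ∈ Icc (0:ℝ) 1, 0 ≤ Υ x)
    (n₀ : ℝ)
    (hΥ0 : Υ 0 = n₀ / (n₀ + 1))
    (hσ0 : σ 0 = 0)
    (U V W : ℝ → ℝ)
    (hU : ∀ l : ℝ, HasDerivAt U (Ffield Υ σ f (U l) (V l) (W l)).1 l)
    (hV : ∀ l : ℝ, HasDerivAt V (Ffield Υ σ f (U l) (V l) (W l)).2.1 l)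
    (hW : ∀ l : ℝ, HasDerivAt W (Ffield Υ σ f (U l) (V l) (W l)).2.2 l)
    (hint : ∀ l : ℝ, U l ∈ Ioo (0:ℝ) 1 ∧ V l ∈ Ioo (0:ℝ) 1 ∧ W l ∈ Ioo (0:ℝ) 1) :
    (0 < n₀ → n₀ ≤ 3 →
      Filter.Tendsto (fun l => (U l, V l, W l)) Filter.atTop
        (nhds ((0 : ℝ), (1 : ℝ), (0 : ℝ)))) ∧
    (n₀ = 0 →
      ∃ Uinf ∈ Icc (0:ℝ) 1,
        Filter.Tendsto (fun l => (U l, V l, W l)) Filter.atTop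
          (nhds (Uinf, (1 : ℝ), (0 : ℝ)))) := by
  obtain ⟨x₀, hx₀, hmin⟩ :=
    isCompact_Icc.exists_isMinOn (nonempty_Icc.2 zero_le_one) hf.continuousOn
  obtain ⟨L, hLσ, hLΥ⟩ :=
    (hσ.eventually_abs_sub_le_mul.and hΥ.eventually_abs_sub_le_mul).exists
  let c : Orbit := ⟨Υ, σ, f, U, V, W, f x₀, L, hU, hV, hW, hint, hfpos x₀ hx₀,
    fun x hx => hmin hx, hσnonneg,
    fun x hx => by simpa [hσ0] using (le_abs_self _).trans (hLσ x hx), hΥnonneg, hLΥ⟩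
  refine ⟨fun hn hn3 => ?_, fun hn => ?_⟩
  · have h34 : c.Υ 0 ≤ 3 / 4 := by
      change Υ 0 ≤ 3 / 4
      rw [hΥ0, div_le_iff₀ (by linarith)]
      linarith
    have hpos : 0 < c.Υ 0 := by change 0 < Υ 0; rw [hΥ0]; positivity
    exact (c.tendsto_u_zero h34 hpos).prodMk_nhds ((c.tendsto_v h34).prodMk_nhds c.tendsto_w)
  · have h0 : c.Υ 0 = 0 := by change Υ 0 = 0; rw [hΥ0, hn, zero_div]
    obtain ⟨l, hl⟩ := c.exists_tendsto_u h0
    exact ⟨l, isClosed_Icc.mem_of_tendsto hl (.of_forall fun t => Ioo_subset_Icc_self (hint t).1),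
      hl.prodMk_nhds ((c.tendsto_v (by rw [h0]; norm_num)).prodMk_nhds c.tendsto_w)⟩

/-- If `0 < n₀ ≤ 3`, every interior orbit converges to
`B₂ = (0,1,0)` as `λ → ∞`; if `n₀ = 0`, every interior orbit converges to a point of
the line `L₄ = {(U,1,0) : U ∈ [0,1]}` as `λ → ∞`. -/
theorem stmt13
    (Υ σ f : ℝ → ℝ)
    (hΥ : ContDiffOn ℝ 1 Υ (Icc 0 1)) (hσ : ContDiffOn ℝ 1 σ (Icc 0 1))
    (hf : ContDiffOn ℝ 1 f (Icc 0 1))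
    (hfpos : ∀ x ∈ Icc (0:ℝ) 1, 0 < f x)
    (hσnonneg : ∀ x ∈ Icc (0:ℝ) 1, 0 ≤ σ x)
    (hΥnonneg : ∀ x ∈ Icc (0:ℝ) 1, 0 ≤ Υ x)
    (n₀ γ₁ : ℝ) (hn₀ : 0 ≤ n₀) (hγ₁ : 1 < γ₁) (hγ₁' : γ₁ ≤ 2)
    (hΥ0 : Υ 0 = n₀ / (n₀ + 1)) (hΥ1 : Υ 1 = 1)
    (hσ0 : σ 0 = 0) (hσ1 : σ 1 = γ₁ - 1)
    (hf0 : 0 < f 0) (hf1 : 0 < f 1)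
    (U V W : ℝ → ℝ)
    (hU : ∀ l : ℝ, HasDerivAt U (Ffield Υ σ f (U l) (V l) (W l)).1 l)
    (hV : ∀ l : ℝ, HasDerivAt V (Ffield Υ σ f (U l) (V l) (W l)).2.1 l)
    (hW : ∀ l : ℝ, HasDerivAt W (Ffield Υ σ f (U l) (V l) (W l)).2.2 l)
    (hint : ∀ l : ℝ, U l ∈ Ioo (0:ℝ) 1 ∧ V l ∈ Ioo (0:ℝ) 1 ∧ W l ∈ Ioo (0:ℝ) 1) :
    (0 < n₀ → n₀ ≤ 3 →
      Filter.Tendsto (fun l => (U l, V l, W l)) Filter.atTop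
        (nhds ((0 : ℝ), (1 : ℝ), (0 : ℝ)))) ∧
    (n₀ = 0 →
      ∃ Uinf ∈ Icc (0:ℝ) 1,
        Filter.Tendsto (fun l => (U l, V l, W l)) Filter.atTop
          (nhds (Uinf, (1 : ℝ), (0 : ℝ)))) :=
  stmt13_general Υ σ f hΥ hσ hf hfpos hσnonneg hΥnonneg n₀ hΥ0 hσ0 U V W hU hV hW hint
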